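/- Let (E,{·,·}) be a coisotropic vector bundle, let (α̂,φ̂) be a Hamiltonian homotopy from μ to ν and (β̂,ψ̂) a Hamiltonian homotopy from ν to ω between coisotropic sections, and let ρ and ρ' be two gluing functions. Then the two compositions with respect to ρ and ρ' are isotopic: (β̂,ψ̂) □_ρ (α̂,φ̂) ≃_H (β̂,ψ̂) □_{ρ'} (α̂,φ̂). -/

import Mathlib

open Set
open scoped Manifold Bundle

/-- A Poisson bracket on a smooth manifold `M` modelled on `I`: an ℝ-bilinear,
antisymmetric bracket on smooth real-valued functions satisfying the Jacobi identity
and the Leibniz rule. -/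
structure PoissonBracket {EM : Type*} [NormedAddCommGroup EM] [NormedSpace ℝ EM]
    {HM : Type*} [TopologicalSpace HM] (I : ModelWithCorners ℝ EM HM)
    (M : Type*) [TopologicalSpace M] [ChartedSpace HM M] where
  bracket : (M → ℝ) → (M → ℝ) → M → ℝ
  smooth_bracket : ∀ f g : M → ℝ, ContMDiff I 𝓘(ℝ, ℝ) (⊤ : ℕ∞) f → ContMDiff I 𝓘(ℝ, ℝ) (⊤ : ℕ∞) g →
    ContMDiff I 𝓘(ℝ, ℝ) (⊤ : ℕ∞) (bracket f g)
  add_left : ∀ f g h : M → ℝ, ContMDiff I 𝓘(ℝ, ℝ) (⊤ : ℕ∞) f → ContMDiff I 𝓘(ℝ, ℝ) (⊤ : ℕ∞) g →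
    ContMDiff I 𝓘(ℝ, ℝ) (⊤ : ℕ∞) h → bracket (f + g) h = bracket f h + bracket g h
  smul_left : ∀ (c : ℝ) (f g : M → ℝ), ContMDiff I 𝓘(ℝ, ℝ) (⊤ : ℕ∞) f → ContMDiff I 𝓘(ℝ, ℝ) (⊤ : ℕ∞) g →
    bracket (c • f) g = c • bracket f g
  antisymm : ∀ f g : M → ℝ, ContMDiff I 𝓘(ℝ, ℝ) (⊤ : ℕ∞) f → ContMDiff I 𝓘(ℝ, ℝ) (⊤ : ℕ∞) g →
    bracket f g = -bracket g f
  jacobi : ∀ f g h : M → ℝ, ContMDiff I 𝓘(ℝ, ℝ) (⊤ : ℕ∞) f → ContMDiff I 𝓘(ℝ, ℝ) (⊤ : ℕ∞) g →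
    ContMDiff I 𝓘(ℝ, ℝ) (⊤ : ℕ∞) h →
    bracket f (bracket g h) + bracket g (bracket h f) + bracket h (bracket f g) = 0
  leibniz : ∀ f g h : M → ℝ, ContMDiff I 𝓘(ℝ, ℝ) (⊤ : ℕ∞) f → ContMDiff I 𝓘(ℝ, ℝ) (⊤ : ℕ∞) g →
    ContMDiff I 𝓘(ℝ, ℝ) (⊤ : ℕ∞) h → bracket f (g * h) = bracket f g * h + g * bracket f h

/-- A smooth one-parameter family of Hamiltonian diffeomorphisms of the Poisson
manifold `(M, P)`: a smooth map `φ : M × [0,1] → M` (written `toFun t x`) such that each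
`φ_t`, `t ∈ [0,1]`, is a diffeomorphism (with inverse `invFun t`), `φ_0 = id`, generated
by a smooth function `F : M × [0,1] → ℝ` in the sense that
`d/dt|_{t=s} f (φ_t x) = {F_s, f} (φ_s x)` for every smooth `f : M → ℝ`. -/
structure HamiltonianFamily {EM : Type*} [NormedAddCommGroup EM] [NormedSpace ℝ EM]
    {HM : Type*} [TopologicalSpace HM] {I : ModelWithCorners ℝ EM HM}
    {M : Type*} [TopologicalSpace M] [ChartedSpace HM M]
    (P : PoissonBracket I M) where
  toFun : ℝ → M → M
  invFun : ℝ → M → M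
  smooth_toFun : ContMDiffOn (I.prod 𝓘(ℝ, ℝ)) I (⊤ : ℕ∞) (fun p : M × ℝ => toFun p.2 p.1)
    (univ ×ˢ Icc 0 1)
  smooth_each : ∀ t ∈ Icc (0:ℝ) 1, ContMDiff I I (⊤ : ℕ∞) (toFun t)
  smooth_inv : ∀ t ∈ Icc (0:ℝ) 1, ContMDiff I I (⊤ : ℕ∞) (invFun t)
  left_inv : ∀ t ∈ Icc (0:ℝ) 1, Function.LeftInverse (invFun t) (toFun t)
  right_inv : ∀ t ∈ Icc (0:ℝ) 1, Function.RightInverse (invFun t) (toFun t)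
  init : toFun 0 = id
  F : ℝ → M → ℝ
  smooth_F : ContMDiffOn (I.prod 𝓘(ℝ, ℝ)) 𝓘(ℝ, ℝ) (⊤ : ℕ∞) (fun p : M × ℝ => F p.2 p.1)
    (univ ×ˢ Icc 0 1)
  deriv_eq : ∀ f : M → ℝ, ContMDiff I 𝓘(ℝ, ℝ) (⊤ : ℕ∞) f → ∀ x : M, ∀ s ∈ Icc (0:ℝ) 1,
    HasDerivWithinAt (fun t => f (toFun t x)) (P.bracket (F s) f (toFun s x)) (Icc 0 1) s

section Bundle

variable {EB : Type*} [NormedAddCommGroup EB] [NormedSpace ℝ EB] [FiniteDimensional ℝ EB]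
  {HB : Type*} [TopologicalSpace HB] {IB : ModelWithCorners ℝ EB HB}
  {S : Type*} [TopologicalSpace S] [ChartedSpace HB S] [IsManifold IB (⊤ : ℕ∞) S]
  {F : Type*} [NormedAddCommGroup F] [NormedSpace ℝ F] [FiniteDimensional ℝ F]
  {V : S → Type*} [∀ x, AddCommGroup (V x)] [∀ x, Module ℝ (V x)]
  [∀ x, TopologicalSpace (V x)] [TopologicalSpace (Bundle.TotalSpace F V)]
  [FiberBundle F V] [VectorBundle ℝ F V] [ContMDiffVectorBundle (⊤ : ℕ∞) F V IB]

variable (F) in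
/-- The graph of a section `μ` of the bundle, as a subset of the total space. -/
def secGraph (μ : ∀ x, V x) : Set (Bundle.TotalSpace F V) :=
  Set.range fun x => Bundle.TotalSpace.mk' F x (μ x)

variable (IB F) in
/-- A section of the bundle is smooth if the induced map into the total space is. -/
def IsSmoothSection (μ : ∀ x, V x) : Prop :=
  ContMDiff IB (IB.prod 𝓘(ℝ, F)) (⊤ : ℕ∞) fun x => Bundle.TotalSpace.mk' F x (μ x)

/-- A subset `C` of the total space of the Poisson manifold given by the bundle is
coisotropic if its vanishing ideal is closed under the Poisson bracket. -/
def IsCoisotropic (P : PoissonBracket (IB.prod 𝓘(ℝ, F)) (Bundle.TotalSpace F V))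
    (C : Set (Bundle.TotalSpace F V)) : Prop :=
  ∀ f g : Bundle.TotalSpace F V → ℝ,
    ContMDiff (IB.prod 𝓘(ℝ, F)) 𝓘(ℝ, ℝ) (⊤ : ℕ∞) f → ContMDiff (IB.prod 𝓘(ℝ, F)) 𝓘(ℝ, ℝ) (⊤ : ℕ∞) g →
    (∀ p ∈ C, f p = 0) → (∀ p ∈ C, g p = 0) → ∀ p ∈ C, P.bracket f g p = 0

/-- `(E, Π)` is a coisotropic vector bundle: the zero section is coisotropic. -/
def IsCoisotropicVectorBundle
    (P : PoissonBracket (IB.prod 𝓘(ℝ, F)) (Bundle.TotalSpace F V)) : Prop :=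
  IsCoisotropic P (secGraph F fun x => (0 : V x))

/-- A Hamiltonian homotopy from the section `μ0` to the section `μ1`: a smooth family of
sections `sec : S × [0,1] → E` from `μ0` to `μ1`, together with a smooth one-parameter
family of Hamiltonian diffeomorphisms of the total space moving the graph of `μ0` to the
graph of `sec t` for each `t ∈ [0,1]`. -/
structure HamiltonianHomotopy (P : PoissonBracket (IB.prod 𝓘(ℝ, F)) (Bundle.TotalSpace F V))
    (μ0 μ1 : ∀ x, V x) where
  sec : ℝ → ∀ x, V x
  smooth_sec : ContMDiffOn (IB.prod 𝓘(ℝ, ℝ)) (IB.prod 𝓘(ℝ, F)) (⊤ : ℕ∞)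
    (fun p : S × ℝ => Bundle.TotalSpace.mk' F p.1 (sec p.2 p.1)) (univ ×ˢ Icc 0 1)
  ham : HamiltonianFamily P
  sec_zero : sec 0 = μ0
  sec_one : sec 1 = μ1
  graph_eq : ∀ t ∈ Icc (0:ℝ) 1, ham.toFun t '' secGraph F μ0 = secGraph F (sec t)


/-- An isotopy of Hamiltonian homotopies: a smooth two-parameter family of sections
`sec t s` together with a smooth two-parameter family of diffeomorphisms `Φ t s` of the
total space such that `Φ 0 s = id`, `sec 1 s` is independent of `s`, for each fixed `s`
the family `t ↦ Φ t s` is a smooth one-parameter family of Hamiltonian diffeomorphisms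
generated by a (jointly smooth) function `gen`, and `Φ t s` maps the graph of `sec 0 s`
onto the graph of `sec t s`. -/
structure HamiltonianIsotopy
    (P : PoissonBracket (IB.prod 𝓘(ℝ, F)) (Bundle.TotalSpace F V)) where
  sec : ℝ → ℝ → ∀ x, V x
  smooth_sec : ContMDiffOn ((IB.prod 𝓘(ℝ, ℝ)).prod 𝓘(ℝ, ℝ)) (IB.prod 𝓘(ℝ, F)) (⊤ : ℕ∞)
    (fun p : (S × ℝ) × ℝ => Bundle.TotalSpace.mk' F p.1.1 (sec p.1.2 p.2 p.1.1))
    ((univ ×ˢ Icc 0 1) ×ˢ Icc 0 1)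
  Φ : ℝ → ℝ → Bundle.TotalSpace F V → Bundle.TotalSpace F V
  Φinv : ℝ → ℝ → Bundle.TotalSpace F V → Bundle.TotalSpace F V
  smooth_Φ : ContMDiffOn (((IB.prod 𝓘(ℝ, F)).prod 𝓘(ℝ, ℝ)).prod 𝓘(ℝ, ℝ)) (IB.prod 𝓘(ℝ, F)) (⊤ : ℕ∞)
    (fun p : (Bundle.TotalSpace F V × ℝ) × ℝ => Φ p.1.2 p.2 p.1.1)
    ((univ ×ˢ Icc 0 1) ×ˢ Icc 0 1)
  smooth_each : ∀ t ∈ Icc (0:ℝ) 1, ∀ s ∈ Icc (0:ℝ) 1,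
    ContMDiff (IB.prod 𝓘(ℝ, F)) (IB.prod 𝓘(ℝ, F)) (⊤ : ℕ∞) (Φ t s)
  smooth_inv : ∀ t ∈ Icc (0:ℝ) 1, ∀ s ∈ Icc (0:ℝ) 1,
    ContMDiff (IB.prod 𝓘(ℝ, F)) (IB.prod 𝓘(ℝ, F)) (⊤ : ℕ∞) (Φinv t s)
  left_inv : ∀ t ∈ Icc (0:ℝ) 1, ∀ s ∈ Icc (0:ℝ) 1, Function.LeftInverse (Φinv t s) (Φ t s)
  right_inv : ∀ t ∈ Icc (0:ℝ) 1, ∀ s ∈ Icc (0:ℝ) 1, Function.RightInverse (Φinv t s) (Φ t s)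
  Φ_zero : ∀ s ∈ Icc (0:ℝ) 1, Φ 0 s = id
  sec_one_const : ∀ s ∈ Icc (0:ℝ) 1, ∀ s' ∈ Icc (0:ℝ) 1, sec 1 s = sec 1 s'
  gen : ℝ → ℝ → Bundle.TotalSpace F V → ℝ
  smooth_gen : ContMDiffOn (((IB.prod 𝓘(ℝ, F)).prod 𝓘(ℝ, ℝ)).prod 𝓘(ℝ, ℝ)) 𝓘(ℝ, ℝ) (⊤ : ℕ∞)
    (fun p : (Bundle.TotalSpace F V × ℝ) × ℝ => gen p.1.2 p.2 p.1.1)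
    ((univ ×ˢ Icc 0 1) ×ˢ Icc 0 1)
  deriv_eq : ∀ s ∈ Icc (0:ℝ) 1, ∀ f : Bundle.TotalSpace F V → ℝ,
    ContMDiff (IB.prod 𝓘(ℝ, F)) 𝓘(ℝ, ℝ) (⊤ : ℕ∞) f → ∀ x : Bundle.TotalSpace F V,
    ∀ t ∈ Icc (0:ℝ) 1,
    HasDerivWithinAt (fun τ => f (Φ τ s x)) (P.bracket (gen t s) f (Φ t s x)) (Icc 0 1) t
  graph_eq : ∀ t ∈ Icc (0:ℝ) 1, ∀ s ∈ Icc (0:ℝ) 1,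
    Φ t s '' secGraph F (sec 0 s) = secGraph F (sec t s)

variable {P : PoissonBracket (IB.prod 𝓘(ℝ, F)) (Bundle.TotalSpace F V)}

/-- The isotopy `iso` starts at the Hamiltonian homotopy `h0` (at `s = 0`) and ends at
the Hamiltonian homotopy `h1` (at `s = 1`). -/
def IsotopyConnects {μ0 μ1 : ∀ x, V x} (iso : HamiltonianIsotopy P)
    (h0 h1 : HamiltonianHomotopy P μ0 μ1) : Prop :=
  (∀ t ∈ Icc (0:ℝ) 1, iso.sec t 0 = h0.sec t) ∧
  (∀ t ∈ Icc (0:ℝ) 1, iso.Φ t 0 = h0.ham.toFun t) ∧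
  (∀ t ∈ Icc (0:ℝ) 1, iso.sec t 1 = h1.sec t) ∧
  (∀ t ∈ Icc (0:ℝ) 1, iso.Φ t 1 = h1.ham.toFun t)

/-- Two Hamiltonian homotopies are isotopic, `≃_H`, if there is an isotopy of
Hamiltonian homotopies from one to the other. -/
def IsotopicHH {μ0 μ1 : ∀ x, V x} (h0 h1 : HamiltonianHomotopy P μ0 μ1) : Prop :=
  ∃ iso : HamiltonianIsotopy P, IsotopyConnects iso h0 h1

/-- The section part of the composition `(B, ψ) □_ρ (A, φ)` of Hamiltonian homotopies
with respect to the gluing function `ρ` (`A` is traversed first). -/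
noncomputable def compSec {μ ν ω : ∀ x, V x} (A : HamiltonianHomotopy P μ ν)
    (B : HamiltonianHomotopy P ν ω) (ρ : ℝ → ℝ) : ℝ → ∀ x, V x := fun t =>
  if t ≤ 1/3 then A.sec (2 * ρ t)
  else if t ≤ 2/3 then A.sec 1
  else B.sec (2 * ρ t - 1)

/-- The diffeomorphism part of the composition `(B, ψ) □_ρ (A, φ)` of Hamiltonian
homotopies with respect to the gluing function `ρ`. -/
noncomputable def compPhi {μ ν ω : ∀ x, V x} (A : HamiltonianHomotopy P μ ν)
    (B : HamiltonianHomotopy P ν ω) (ρ : ℝ → ℝ) :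
    ℝ → Bundle.TotalSpace F V → Bundle.TotalSpace F V := fun t x =>
  if t ≤ 1/3 then A.ham.toFun (2 * ρ t) x
  else if t ≤ 2/3 then A.ham.toFun 1 x
  else B.ham.toFun (2 * ρ t - 1) (A.ham.toFun 1 x)

/-- The Hamiltonian homotopy `Cc` realizes the composition `(B, ψ) □_ρ (A, φ)`: its
section part and its family of diffeomorphisms are given by the gluing formulas. -/
def RealizesComp {μ ν ω : ∀ x, V x} (Cc : HamiltonianHomotopy P μ ω)
    (B : HamiltonianHomotopy P ν ω) (A : HamiltonianHomotopy P μ ν) (ρ : ℝ → ℝ) : Prop :=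
  (∀ t ∈ Icc (0:ℝ) 1, Cc.sec t = compSec A B ρ t) ∧
  (∀ t ∈ Icc (0:ℝ) 1, Cc.ham.toFun t = compPhi A B ρ t)

/-- `h` is the constant (identity) Hamiltonian homotopy `id_μ` at the section `μ`. -/
def IsIdHomotopy {μ : ∀ x, V x} (h : HamiltonianHomotopy P μ μ) : Prop :=
  (∀ t ∈ Icc (0:ℝ) 1, h.sec t = μ) ∧ (∀ t ∈ Icc (0:ℝ) 1, h.ham.toFun t = id)

/-- `R` is the reversed Hamiltonian homotopy `(μ̂, φ̂)⁻¹ = (μ_{1-t}, φ_{1-t} ∘ φ₁⁻¹)`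
of `A`. -/
def IsReverseOf {μ0 μ1 : ∀ x, V x} (R : HamiltonianHomotopy P μ1 μ0)
    (A : HamiltonianHomotopy P μ0 μ1) : Prop :=
  (∀ t ∈ Icc (0:ℝ) 1, R.sec t = A.sec (1 - t)) ∧
  (∀ t ∈ Icc (0:ℝ) 1, ∀ x : Bundle.TotalSpace F V,
    R.ham.toFun t x = A.ham.toFun (1 - t) (A.ham.invFun 1 x))

/-- A gluing function: a smooth function `ρ : [0,1] → [0,1]` with `ρ 0 = 0`, `ρ 1 = 1`,
strictly positive derivative on `[0,1/3)` and on `(2/3,1]`, and identically `1/2` on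
`[1/3,2/3]`. -/
structure IsGluingFunction (ρ : ℝ → ℝ) : Prop where
  smooth : ContDiffOn ℝ (⊤ : ℕ∞) ρ (Icc 0 1)
  mapsTo : MapsTo ρ (Icc 0 1) (Icc 0 1)
  map_zero : ρ 0 = 0
  map_one : ρ 1 = 1
  deriv_pos_left : ∀ t ∈ Ico (0:ℝ) (1/3), 0 < derivWithin ρ (Icc 0 1) t
  deriv_pos_right : ∀ t ∈ Ioc (2/3:ℝ) 1, 0 < derivWithin ρ (Icc 0 1) t
  strictMono_left : StrictMonoOn ρ (Ico 0 (1/3))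
  strictMono_right : StrictMonoOn ρ (Ioc (2/3) 1)
  eq_half : ∀ t ∈ Icc (1/3:ℝ) (2/3), ρ t = 1/2

open Filter Topology in
lemma glue_le_half {ρ : ℝ → ℝ} (hρ : IsGluingFunction ρ) {t : ℝ} (h0 : 0 ≤ t)
    (h1 : t ≤ 2/3) : ρ t ≤ 1/2 := by
  rcases le_or_gt (1/3) t with h | h
  · exact (hρ.eq_half t ⟨h, h1⟩).le
  · have hcont : ContinuousWithinAt ρ (Ioo t (1/3)) (1/3) := by
      refine (hρ.smooth.continuousOn.continuousWithinAt ?_).mono ?_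
      · constructor <;> norm_num
      · intro u hu; exact ⟨h0.trans hu.1.le, by linarith [hu.2]⟩
    have hne : (𝓝[Ioo t (1/3)] (1/3)).NeBot := right_nhdsWithin_Ioo_neBot h
    have htend : Filter.Tendsto ρ (𝓝[Ioo t (1/3)] (1/3)) (nhds (1/2)) := by
      have := hcont.tendsto
      rwa [hρ.eq_half (1/3) ⟨le_refl _, by norm_num⟩] at this
    refine ge_of_tendsto htend ?_
    filter_upwards [self_mem_nhdsWithin] with u hu
    exact (hρ.strictMono_left ⟨h0, h⟩ ⟨h0.trans hu.1.le, hu.2⟩ hu.1).le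

open Filter Topology in
lemma glue_ge_half {ρ : ℝ → ℝ} (hρ : IsGluingFunction ρ) {t : ℝ} (h0 : 1/3 ≤ t)
    (h1 : t ≤ 1) : 1/2 ≤ ρ t := by
  rcases le_or_gt t (2/3) with h | h
  · exact (hρ.eq_half t ⟨h0, h⟩).ge
  · have hcont : ContinuousWithinAt ρ (Ioo (2/3) t) (2/3) := by
      refine (hρ.smooth.continuousOn.continuousWithinAt ?_).mono ?_
      · constructor <;> norm_num
      · intro u hu; exact ⟨by linarith [hu.1], by linarith [hu.2]⟩
    have hne : (𝓝[Ioo (2/3:ℝ) t] (2/3)).NeBot := left_nhdsWithin_Ioo_neBot h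
    have htend : Filter.Tendsto ρ (𝓝[Ioo (2/3:ℝ) t] (2/3)) (nhds (1/2)) := by
      have := hcont.tendsto
      rwa [hρ.eq_half (2/3) ⟨by norm_num, le_refl _⟩] at this
    refine le_of_tendsto htend ?_
    filter_upwards [self_mem_nhdsWithin] with u hu
    exact (hρ.strictMono_right ⟨hu.1, by linarith [hu.2]⟩ ⟨h, h1⟩ hu.2).le

lemma glue_hasDeriv {ρ : ℝ → ℝ} (hρ : IsGluingFunction ρ) {t : ℝ} (ht : t ∈ Icc (0:ℝ) 1) :
    HasDerivWithinAt ρ (derivWithin ρ (Icc 0 1) t) (Icc 0 1) t :=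
  ((hρ.smooth.differentiableOn (by simp)) t ht).hasDerivWithinAt

lemma glue_deriv_zero {ρ : ℝ → ℝ} (hρ : IsGluingFunction ρ) {t : ℝ}
    (ht : t ∈ Icc (1/3:ℝ) (2/3)) : derivWithin ρ (Icc 0 1) t = 0 := by
  have hsub : Icc (1/3:ℝ) (2/3) ⊆ Icc 0 1 := Icc_subset_Icc (by norm_num) (by norm_num)
  have h1 : HasDerivWithinAt ρ (derivWithin ρ (Icc 0 1) t) (Icc (1/3) (2/3)) t :=
    (glue_hasDeriv hρ (hsub ht)).mono hsub
  have h2 : HasDerivWithinAt ρ 0 (Icc (1/3:ℝ) (2/3)) t :=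
    (hasDerivWithinAt_const t _ (1/2)).congr (fun y hy => hρ.eq_half y hy) (hρ.eq_half t ht)
  have hu : UniqueDiffWithinAt ℝ (Icc (1/3:ℝ) (2/3)) t := (uniqueDiffOn_Icc (by norm_num)) t ht
  calc derivWithin ρ (Icc 0 1) t = derivWithin ρ (Icc (1/3) (2/3)) t := (h1.derivWithin hu).symm
    _ = 0 := h2.derivWithin hu

lemma glue_deriv_smooth {ρ : ℝ → ℝ} (hρ : IsGluingFunction ρ) :
    ContDiffOn ℝ (⊤:ℕ∞) (derivWithin ρ (Icc 0 1)) (Icc 0 1) :=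
  hρ.smooth.derivWithin (uniqueDiffOn_Icc one_pos) (by simp)

lemma HamiltonianFamily.contMDiff_F_slice {EM : Type*} [NormedAddCommGroup EM]
    [NormedSpace ℝ EM] {HM : Type*} [TopologicalSpace HM] {I : ModelWithCorners ℝ EM HM}
    {M : Type*} [TopologicalSpace M] [ChartedSpace HM M] [IsManifold I (⊤ : ℕ∞) M]
    {P : PoissonBracket I M} (H : HamiltonianFamily P) {t : ℝ} (ht : t ∈ Icc (0:ℝ) 1) :
    ContMDiff I 𝓘(ℝ, ℝ) (⊤ : ℕ∞) (H.F t) := by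
  have h1 : ContMDiff I (I.prod 𝓘(ℝ, ℝ)) (⊤ : ℕ∞) (fun x : M => (x, t)) :=
    contMDiff_id.prodMk contMDiff_const
  have h2 : ContMDiffOn I 𝓘(ℝ, ℝ) (⊤ : ℕ∞)
      ((fun p : M × ℝ => H.F p.2 p.1) ∘ (fun x : M => (x, t))) univ :=
    H.smooth_F.comp h1.contMDiffOn (fun x _ => ⟨trivial, ht⟩)
  rw [contMDiffOn_univ] at h2
  exact h2

lemma combo_contMDiffOn {EN : Type*} [NormedAddCommGroup EN] [NormedSpace ℝ EN]
    {HN : Type*} [TopologicalSpace HN] {IN : ModelWithCorners ℝ EN HN}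
    {N : Type*} [TopologicalSpace N] [ChartedSpace HN N] [IsManifold IN (⊤ : ℕ∞) N]
    {f g : ℝ → ℝ} (hf : ContDiffOn ℝ (⊤:ℕ∞) f (Icc 0 1)) (hg : ContDiffOn ℝ (⊤:ℕ∞) g (Icc 0 1))
    {J : Set ℝ} (hJ : J ⊆ Icc 0 1) :
    ContMDiffOn ((IN.prod 𝓘(ℝ, ℝ)).prod 𝓘(ℝ, ℝ)) 𝓘(ℝ, ℝ) (⊤ : ℕ∞)
      (fun p : (N × ℝ) × ℝ => (1 - p.2) * f p.1.2 + p.2 * g p.1.2)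
      ((univ ×ˢ J) ×ˢ Icc 0 1) := by
  have hproj : ContMDiff ((IN.prod 𝓘(ℝ, ℝ)).prod 𝓘(ℝ, ℝ)) 𝓘(ℝ, ℝ) (⊤ : ℕ∞)
      (fun p : (N × ℝ) × ℝ => p.1.2) := contMDiff_snd.comp contMDiff_fst
  have hs : ContMDiff ((IN.prod 𝓘(ℝ, ℝ)).prod 𝓘(ℝ, ℝ)) 𝓘(ℝ, ℝ) (⊤ : ℕ∞)
      (fun p : (N × ℝ) × ℝ => p.2) := contMDiff_snd
  have hmt : MapsTo (fun p : (N × ℝ) × ℝ => p.1.2) ((univ ×ˢ J) ×ˢ Icc 0 1) (Icc 0 1) :=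
    fun p hp => hJ hp.1.2
  have h1 : ContMDiffOn ((IN.prod 𝓘(ℝ, ℝ)).prod 𝓘(ℝ, ℝ)) 𝓘(ℝ, ℝ) (⊤ : ℕ∞)
      (fun p : (N × ℝ) × ℝ => f p.1.2) ((univ ×ˢ J) ×ˢ Icc 0 1) :=
    hf.contMDiffOn.comp hproj.contMDiffOn hmt
  have h2 : ContMDiffOn ((IN.prod 𝓘(ℝ, ℝ)).prod 𝓘(ℝ, ℝ)) 𝓘(ℝ, ℝ) (⊤ : ℕ∞)
      (fun p : (N × ℝ) × ℝ => g p.1.2) ((univ ×ˢ J) ×ˢ Icc 0 1) :=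
    hg.contMDiffOn.comp hproj.contMDiffOn hmt
  exact ((contMDiffOn_const.sub hs.contMDiffOn).mul h1).add (hs.contMDiffOn.mul h2)

/-- Inverse family for the composition of Hamiltonian homotopies. -/
noncomputable def isoPhiInv {μ ν ω : ∀ x, V x} (A : HamiltonianHomotopy P μ ν)
    (B : HamiltonianHomotopy P ν ω) (ρ : ℝ → ℝ) :
    ℝ → Bundle.TotalSpace F V → Bundle.TotalSpace F V := fun t x =>
  if t ≤ 1/3 then A.ham.invFun (2 * ρ t) x
  else if t ≤ 2/3 then A.ham.invFun 1 x
  else A.ham.invFun 1 (B.ham.invFun (2 * ρ t - 1) x)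

/-- Generating function for the composition of Hamiltonian homotopies. -/
noncomputable def isoGen {μ ν ω : ∀ x, V x} (A : HamiltonianHomotopy P μ ν)
    (B : HamiltonianHomotopy P ν ω) (ρ d : ℝ → ℝ) :
    ℝ → Bundle.TotalSpace F V → ℝ := fun t p =>
  if t ≤ 2/3 then 2 * d t * A.ham.F (2 * ρ t) p
  else 2 * d t * B.ham.F (2 * ρ t - 1) p

lemma compPhi_eq_left {μ ν ω : ∀ x, V x} (A : HamiltonianHomotopy P μ ν)
    (B : HamiltonianHomotopy P ν ω) {g : ℝ → ℝ}
    (hhalf : ∀ u ∈ Icc (1/3:ℝ) (2/3), g u = 1/2) {t : ℝ} (ht : t ≤ 2/3)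
    (x : Bundle.TotalSpace F V) : compPhi A B g t x = A.ham.toFun (2 * g t) x := by
  unfold compPhi
  by_cases h1 : t ≤ 1/3
  · rw [if_pos h1]
  · rw [if_neg h1, if_pos ht, hhalf t ⟨le_of_not_ge h1, ht⟩]; norm_num

lemma compPhi_eq_right {μ ν ω : ∀ x, V x} (A : HamiltonianHomotopy P μ ν)
    (B : HamiltonianHomotopy P ν ω) {g : ℝ → ℝ}
    (hhalf : ∀ u ∈ Icc (1/3:ℝ) (2/3), g u = 1/2) {t : ℝ} (ht : 1/3 ≤ t)
    (x : Bundle.TotalSpace F V) :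
    compPhi A B g t x = B.ham.toFun (2 * g t - 1) (A.ham.toFun 1 x) := by
  unfold compPhi
  by_cases h2 : t ≤ 2/3
  · have hg : g t = 1/2 := hhalf t ⟨ht, h2⟩
    by_cases h1 : t ≤ 1/3
    · rw [if_pos h1, hg]; norm_num [B.ham.init]
    · rw [if_neg h1, if_pos h2, hg]; norm_num [B.ham.init]
  · rw [if_neg (by linarith : ¬ t ≤ 1/3), if_neg h2]

lemma compSec_eq_left {μ ν ω : ∀ x, V x} (A : HamiltonianHomotopy P μ ν)
    (B : HamiltonianHomotopy P ν ω) {g : ℝ → ℝ}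
    (hhalf : ∀ u ∈ Icc (1/3:ℝ) (2/3), g u = 1/2) {t : ℝ} (ht : t ≤ 2/3) :
    compSec A B g t = A.sec (2 * g t) := by
  unfold compSec
  by_cases h1 : t ≤ 1/3
  · rw [if_pos h1]
  · rw [if_neg h1, if_pos ht, hhalf t ⟨le_of_not_ge h1, ht⟩]; norm_num

lemma compSec_eq_right {μ ν ω : ∀ x, V x} (A : HamiltonianHomotopy P μ ν)
    (B : HamiltonianHomotopy P ν ω) {g : ℝ → ℝ}
    (hhalf : ∀ u ∈ Icc (1/3:ℝ) (2/3), g u = 1/2) {t : ℝ} (ht : 1/3 ≤ t) :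
    compSec A B g t = B.sec (2 * g t - 1) := by
  unfold compSec
  by_cases h2 : t ≤ 2/3
  · have hg : g t = 1/2 := hhalf t ⟨ht, h2⟩
    by_cases h1 : t ≤ 1/3
    · rw [if_pos h1, hg]; norm_num [A.sec_one, B.sec_zero]
    · rw [if_neg h1, if_pos h2, hg]; norm_num [A.sec_one, B.sec_zero]
  · rw [if_neg (by linarith : ¬ t ≤ 1/3), if_neg h2]



set_option linter.unusedSectionVars false

set_option maxHeartbeats 1000000 in
lemma aux_smooth_Phi {μ ν ω : ∀ x, V x} (A : HamiltonianHomotopy P μ ν)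
    (B : HamiltonianHomotopy P ν ω) {ρ ρ' : ℝ → ℝ}
    (hρ : IsGluingFunction ρ) (hρ' : IsGluingFunction ρ') :
    ContMDiffOn (((IB.prod 𝓘(ℝ, F)).prod 𝓘(ℝ, ℝ)).prod 𝓘(ℝ, ℝ)) (IB.prod 𝓘(ℝ, F)) (⊤ : ℕ∞)
      (fun p : (Bundle.TotalSpace F V × ℝ) × ℝ =>
        compPhi A B (fun u => (1 - p.2) * ρ u + p.2 * ρ' u) p.1.2 p.1.1)
      ((univ ×ˢ Icc 0 1) ×ˢ Icc 0 1) := by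
  have hhalf : ∀ s : ℝ, ∀ u ∈ Icc (1/3:ℝ) (2/3),
      (1 - s) * ρ u + s * ρ' u = 1/2 := by
    intro s u hu; rw [hρ.eq_half u hu, hρ'.eq_half u hu]; ring
  have hσA := combo_contMDiffOn (N := Bundle.TotalSpace F V) (IN := IB.prod 𝓘(ℝ, F))
    (hρ.smooth.of_le (by simp)) (hρ'.smooth.of_le (by simp))
    (Icc_subset_Icc (le_refl (0:ℝ)) (by norm_num : (2/3:ℝ) ≤ 1))
  have hσB := combo_contMDiffOn (N := Bundle.TotalSpace F V) (IN := IB.prod 𝓘(ℝ, F))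
    (hρ.smooth.of_le (by simp)) (hρ'.smooth.of_le (by simp))
    (Icc_subset_Icc (by norm_num : (0:ℝ) ≤ 1/3) (le_refl (1:ℝ)))
  -- bounds for the section-combination
  have hmem : ∀ s ∈ Icc (0:ℝ) 1, ∀ u ∈ Icc (0:ℝ) 1,
      (1 - s) * ρ u + s * ρ' u ∈ Icc (0:ℝ) 1 := by
    intro s hs u hu
    have h1 := hρ.mapsTo hu; have h2 := hρ'.mapsTo hu
    constructor
    · nlinarith [h1.1, h2.1, hs.1, hs.2]
    · nlinarith [h1.2, h2.2, hs.1, hs.2]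
  have hle : ∀ s ∈ Icc (0:ℝ) 1, ∀ u ∈ Icc (0:ℝ) (2/3),
      (1 - s) * ρ u + s * ρ' u ≤ 1/2 := by
    intro s hs u hu
    have h1 := glue_le_half hρ hu.1 hu.2; have h2 := glue_le_half hρ' hu.1 hu.2
    nlinarith [hs.1, hs.2]
  have hge : ∀ s ∈ Icc (0:ℝ) 1, ∀ u ∈ Icc (1/3:ℝ) 1,
      1/2 ≤ (1 - s) * ρ u + s * ρ' u := by
    intro s hs u hu
    have h1 := glue_ge_half hρ hu.1 hu.2; have h2 := glue_ge_half hρ' hu.1 hu.2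
    nlinarith [hs.1, hs.2]
  -- the A-side form
  have hAform : ContMDiffOn (((IB.prod 𝓘(ℝ, F)).prod 𝓘(ℝ, ℝ)).prod 𝓘(ℝ, ℝ)) (IB.prod 𝓘(ℝ, F)) (⊤ : ℕ∞)
      (fun p : (Bundle.TotalSpace F V × ℝ) × ℝ =>
        A.ham.toFun (2 * ((1 - p.2) * ρ p.1.2 + p.2 * ρ' p.1.2)) p.1.1)
      ((univ ×ˢ Icc (0:ℝ) (2/3)) ×ˢ Icc 0 1) := by
    refine A.ham.smooth_toFun.comp (ContMDiffOn.prodMk ?_ ?_) ?_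
    · exact (contMDiff_fst.comp contMDiff_fst).contMDiffOn
    · exact contMDiffOn_const.mul hσA
    · intro p hp
      refine ⟨trivial, ?_, ?_⟩
      · have := (hmem p.2 hp.2 p.1.2 ⟨hp.1.2.1, by linarith [hp.1.2.2]⟩).1
        show (0:ℝ) ≤ 2 * ((1 - p.2) * ρ p.1.2 + p.2 * ρ' p.1.2); linarith
      · have := hle p.2 hp.2 p.1.2 hp.1.2
        show 2 * ((1 - p.2) * ρ p.1.2 + p.2 * ρ' p.1.2) ≤ 1; linarith
  -- the B-side form
  have hBform : ContMDiffOn (((IB.prod 𝓘(ℝ, F)).prod 𝓘(ℝ, ℝ)).prod 𝓘(ℝ, ℝ)) (IB.prod 𝓘(ℝ, F)) (⊤ : ℕ∞)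
      (fun p : (Bundle.TotalSpace F V × ℝ) × ℝ =>
        B.ham.toFun (2 * ((1 - p.2) * ρ p.1.2 + p.2 * ρ' p.1.2) - 1) (A.ham.toFun 1 p.1.1))
      ((univ ×ˢ Icc (1/3:ℝ) 1) ×ˢ Icc 0 1) := by
    refine B.ham.smooth_toFun.comp (ContMDiffOn.prodMk ?_ ?_) ?_
    · exact ((A.ham.smooth_each 1 ⟨zero_le_one, le_refl 1⟩).comp
        (contMDiff_fst.comp contMDiff_fst)).contMDiffOn
    · exact (contMDiffOn_const.mul hσB).sub contMDiffOn_const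
    · intro p hp
      refine ⟨trivial, ?_, ?_⟩
      · have := hge p.2 hp.2 p.1.2 hp.1.2
        show (0:ℝ) ≤ 2 * ((1 - p.2) * ρ p.1.2 + p.2 * ρ' p.1.2) - 1; linarith
      · have := (hmem p.2 hp.2 p.1.2 ⟨by linarith [hp.1.2.1], hp.1.2.2⟩).2
        show 2 * ((1 - p.2) * ρ p.1.2 + p.2 * ρ' p.1.2) - 1 ≤ 1; linarith
  intro p hp
  rcases lt_or_ge p.1.2 (2/3) with hlt | hge'
  · have hpA : p ∈ (univ ×ˢ Icc (0:ℝ) (2/3)) ×ˢ Icc (0:ℝ) 1 :=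
      ⟨⟨trivial, hp.1.2.1, hlt.le⟩, hp.2⟩
    refine ((hAform p hpA).congr ?_ ?_).mono_of_mem_nhdsWithin ?_
    · intro q hq; exact compPhi_eq_left A B (hhalf q.2) hq.1.2.2 q.1.1
    · exact compPhi_eq_left A B (hhalf p.2) hlt.le p.1.1
    · refine mem_nhdsWithin.mpr ⟨(fun q : (Bundle.TotalSpace F V × ℝ) × ℝ => q.1.2) ⁻¹'
        Iio (2/3), isOpen_Iio.preimage (continuous_snd.comp continuous_fst), hlt, ?_⟩
      intro q hq
      exact ⟨⟨trivial, hq.2.1.2.1, le_of_lt hq.1⟩, hq.2.2⟩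
  · have hpB : p ∈ (univ ×ˢ Icc (1/3:ℝ) 1) ×ˢ Icc (0:ℝ) 1 :=
      ⟨⟨trivial, by linarith, hp.1.2.2⟩, hp.2⟩
    refine ((hBform p hpB).congr ?_ ?_).mono_of_mem_nhdsWithin ?_
    · intro q hq; exact compPhi_eq_right A B (hhalf q.2) hq.1.2.1 q.1.1
    · exact compPhi_eq_right A B (hhalf p.2) (by linarith) p.1.1
    · refine mem_nhdsWithin.mpr ⟨(fun q : (Bundle.TotalSpace F V × ℝ) × ℝ => q.1.2) ⁻¹'
        Ioi (1/3), isOpen_Ioi.preimage (continuous_snd.comp continuous_fst), by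
          simp only [mem_preimage, mem_Ioi]; linarith, ?_⟩
      intro q hq
      exact ⟨⟨trivial, le_of_lt hq.1, hq.2.1.2.2⟩, hq.2.2⟩



set_option maxHeartbeats 1000000 in
lemma aux_smooth_sec {μ ν ω : ∀ x, V x} (A : HamiltonianHomotopy P μ ν)
    (B : HamiltonianHomotopy P ν ω) {ρ ρ' : ℝ → ℝ}
    (hρ : IsGluingFunction ρ) (hρ' : IsGluingFunction ρ') :
    ContMDiffOn ((IB.prod 𝓘(ℝ, ℝ)).prod 𝓘(ℝ, ℝ)) (IB.prod 𝓘(ℝ, F)) (⊤ : ℕ∞)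
      (fun p : (S × ℝ) × ℝ => Bundle.TotalSpace.mk' F p.1.1
        (compSec A B (fun u => (1 - p.2) * ρ u + p.2 * ρ' u) p.1.2 p.1.1))
      ((univ ×ˢ Icc 0 1) ×ˢ Icc 0 1) := by
  have hhalf : ∀ s : ℝ, ∀ u ∈ Icc (1/3:ℝ) (2/3),
      (1 - s) * ρ u + s * ρ' u = 1/2 := by
    intro s u hu; rw [hρ.eq_half u hu, hρ'.eq_half u hu]; ring
  have hσA := combo_contMDiffOn (N := S) (IN := IB)
    (hρ.smooth.of_le (by simp)) (hρ'.smooth.of_le (by simp))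
    (Icc_subset_Icc (le_refl (0:ℝ)) (by norm_num : (2/3:ℝ) ≤ 1))
  have hσB := combo_contMDiffOn (N := S) (IN := IB)
    (hρ.smooth.of_le (by simp)) (hρ'.smooth.of_le (by simp))
    (Icc_subset_Icc (by norm_num : (0:ℝ) ≤ 1/3) (le_refl (1:ℝ)))
  have hmem : ∀ s ∈ Icc (0:ℝ) 1, ∀ u ∈ Icc (0:ℝ) 1,
      (1 - s) * ρ u + s * ρ' u ∈ Icc (0:ℝ) 1 := by
    intro s hs u hu
    have h1 := hρ.mapsTo hu; have h2 := hρ'.mapsTo hu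
    constructor
    · nlinarith [h1.1, h2.1, hs.1, hs.2]
    · nlinarith [h1.2, h2.2, hs.1, hs.2]
  have hle : ∀ s ∈ Icc (0:ℝ) 1, ∀ u ∈ Icc (0:ℝ) (2/3),
      (1 - s) * ρ u + s * ρ' u ≤ 1/2 := by
    intro s hs u hu
    have h1 := glue_le_half hρ hu.1 hu.2; have h2 := glue_le_half hρ' hu.1 hu.2
    nlinarith [hs.1, hs.2]
  have hge : ∀ s ∈ Icc (0:ℝ) 1, ∀ u ∈ Icc (1/3:ℝ) 1,
      1/2 ≤ (1 - s) * ρ u + s * ρ' u := by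
    intro s hs u hu
    have h1 := glue_ge_half hρ hu.1 hu.2; have h2 := glue_ge_half hρ' hu.1 hu.2
    nlinarith [hs.1, hs.2]
  have hAform : ContMDiffOn ((IB.prod 𝓘(ℝ, ℝ)).prod 𝓘(ℝ, ℝ)) (IB.prod 𝓘(ℝ, F)) (⊤ : ℕ∞)
      (fun p : (S × ℝ) × ℝ => Bundle.TotalSpace.mk' F p.1.1
        (A.sec (2 * ((1 - p.2) * ρ p.1.2 + p.2 * ρ' p.1.2)) p.1.1))
      ((univ ×ˢ Icc (0:ℝ) (2/3)) ×ˢ Icc 0 1) := by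
    have hin : ContMDiffOn ((IB.prod 𝓘(ℝ, ℝ)).prod 𝓘(ℝ, ℝ)) (IB.prod 𝓘(ℝ, ℝ)) (⊤ : ℕ∞)
        (fun p : (S × ℝ) × ℝ => (p.1.1, 2 * ((1 - p.2) * ρ p.1.2 + p.2 * ρ' p.1.2)))
        ((univ ×ˢ Icc (0:ℝ) (2/3)) ×ˢ Icc 0 1) :=
      ContMDiffOn.prodMk (contMDiff_fst.comp contMDiff_fst).contMDiffOn
        (contMDiffOn_const.mul hσA)
    refine A.smooth_sec.comp hin ?_
    intro p hp
    refine ⟨trivial, ?_, ?_⟩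
    · have := (hmem p.2 hp.2 p.1.2 ⟨hp.1.2.1, by linarith [hp.1.2.2]⟩).1
      show (0:ℝ) ≤ 2 * ((1 - p.2) * ρ p.1.2 + p.2 * ρ' p.1.2); linarith
    · have := hle p.2 hp.2 p.1.2 hp.1.2
      show 2 * ((1 - p.2) * ρ p.1.2 + p.2 * ρ' p.1.2) ≤ 1; linarith
  have hBform : ContMDiffOn ((IB.prod 𝓘(ℝ, ℝ)).prod 𝓘(ℝ, ℝ)) (IB.prod 𝓘(ℝ, F)) (⊤ : ℕ∞)
      (fun p : (S × ℝ) × ℝ => Bundle.TotalSpace.mk' F p.1.1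
        (B.sec (2 * ((1 - p.2) * ρ p.1.2 + p.2 * ρ' p.1.2) - 1) p.1.1))
      ((univ ×ˢ Icc (1/3:ℝ) 1) ×ˢ Icc 0 1) := by
    have hin : ContMDiffOn ((IB.prod 𝓘(ℝ, ℝ)).prod 𝓘(ℝ, ℝ)) (IB.prod 𝓘(ℝ, ℝ)) (⊤ : ℕ∞)
        (fun p : (S × ℝ) × ℝ => (p.1.1, 2 * ((1 - p.2) * ρ p.1.2 + p.2 * ρ' p.1.2) - 1))
        ((univ ×ˢ Icc (1/3:ℝ) 1) ×ˢ Icc 0 1) :=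
      ContMDiffOn.prodMk (contMDiff_fst.comp contMDiff_fst).contMDiffOn
        ((contMDiffOn_const.mul hσB).sub contMDiffOn_const)
    refine B.smooth_sec.comp hin ?_
    intro p hp
    refine ⟨trivial, ?_, ?_⟩
    · have := hge p.2 hp.2 p.1.2 hp.1.2
      show (0:ℝ) ≤ 2 * ((1 - p.2) * ρ p.1.2 + p.2 * ρ' p.1.2) - 1; linarith
    · have := (hmem p.2 hp.2 p.1.2 ⟨by linarith [hp.1.2.1], hp.1.2.2⟩).2
      show 2 * ((1 - p.2) * ρ p.1.2 + p.2 * ρ' p.1.2) - 1 ≤ 1; linarith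
  intro p hp
  rcases lt_or_ge p.1.2 (2/3) with hlt | hge'
  · have hpA : p ∈ (univ ×ˢ Icc (0:ℝ) (2/3)) ×ˢ Icc (0:ℝ) 1 :=
      ⟨⟨trivial, hp.1.2.1, hlt.le⟩, hp.2⟩
    refine ((hAform p hpA).congr ?_ ?_).mono_of_mem_nhdsWithin ?_
    · intro q hq
      exact congrArg (Bundle.TotalSpace.mk' F q.1.1)
        (congrFun (compSec_eq_left A B (hhalf q.2) hq.1.2.2) q.1.1)
    · exact congrArg (Bundle.TotalSpace.mk' F p.1.1)
        (congrFun (compSec_eq_left A B (hhalf p.2) hlt.le) p.1.1)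
    · refine mem_nhdsWithin.mpr ⟨(fun q : (S × ℝ) × ℝ => q.1.2) ⁻¹'
        Iio (2/3), isOpen_Iio.preimage (continuous_snd.comp continuous_fst), hlt, ?_⟩
      intro q hq
      exact ⟨⟨trivial, hq.2.1.2.1, le_of_lt hq.1⟩, hq.2.2⟩
  · have hpB : p ∈ (univ ×ˢ Icc (1/3:ℝ) 1) ×ˢ Icc (0:ℝ) 1 :=
      ⟨⟨trivial, by linarith, hp.1.2.2⟩, hp.2⟩
    refine ((hBform p hpB).congr ?_ ?_).mono_of_mem_nhdsWithin ?_
    · intro q hq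
      exact congrArg (Bundle.TotalSpace.mk' F q.1.1)
        (congrFun (compSec_eq_right A B (hhalf q.2) hq.1.2.1) q.1.1)
    · exact congrArg (Bundle.TotalSpace.mk' F p.1.1)
        (congrFun (compSec_eq_right A B (hhalf p.2) (by linarith)) p.1.1)
    · refine mem_nhdsWithin.mpr ⟨(fun q : (S × ℝ) × ℝ => q.1.2) ⁻¹'
        Ioi (1/3), isOpen_Ioi.preimage (continuous_snd.comp continuous_fst), by
          simp only [mem_preimage, mem_Ioi]; linarith, ?_⟩
      intro q hq
      exact ⟨⟨trivial, le_of_lt hq.1, hq.2.1.2.2⟩, hq.2.2⟩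

set_option maxHeartbeats 1000000 in
lemma aux_smooth_gen {μ ν ω : ∀ x, V x} (A : HamiltonianHomotopy P μ ν)
    (B : HamiltonianHomotopy P ν ω) {ρ ρ' : ℝ → ℝ}
    (hρ : IsGluingFunction ρ) (hρ' : IsGluingFunction ρ') :
    ContMDiffOn (((IB.prod 𝓘(ℝ, F)).prod 𝓘(ℝ, ℝ)).prod 𝓘(ℝ, ℝ)) 𝓘(ℝ, ℝ) (⊤ : ℕ∞)
      (fun p : (Bundle.TotalSpace F V × ℝ) × ℝ =>
        isoGen A B (fun u => (1 - p.2) * ρ u + p.2 * ρ' u)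
          (fun u => (1 - p.2) * derivWithin ρ (Icc 0 1) u +
            p.2 * derivWithin ρ' (Icc 0 1) u) p.1.2 p.1.1)
      ((univ ×ˢ Icc 0 1) ×ˢ Icc 0 1) := by
  have hmem : ∀ s ∈ Icc (0:ℝ) 1, ∀ u ∈ Icc (0:ℝ) 1,
      (1 - s) * ρ u + s * ρ' u ∈ Icc (0:ℝ) 1 := by
    intro s hs u hu
    have h1 := hρ.mapsTo hu; have h2 := hρ'.mapsTo hu
    constructor
    · nlinarith [h1.1, h2.1, hs.1, hs.2]
    · nlinarith [h1.2, h2.2, hs.1, hs.2]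
  have hle : ∀ s ∈ Icc (0:ℝ) 1, ∀ u ∈ Icc (0:ℝ) (2/3),
      (1 - s) * ρ u + s * ρ' u ≤ 1/2 := by
    intro s hs u hu
    have h1 := glue_le_half hρ hu.1 hu.2; have h2 := glue_le_half hρ' hu.1 hu.2
    nlinarith [hs.1, hs.2]
  have hge : ∀ s ∈ Icc (0:ℝ) 1, ∀ u ∈ Icc (1/3:ℝ) 1,
      1/2 ≤ (1 - s) * ρ u + s * ρ' u := by
    intro s hs u hu
    have h1 := glue_ge_half hρ hu.1 hu.2; have h2 := glue_ge_half hρ' hu.1 hu.2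
    nlinarith [hs.1, hs.2]
  have hσA := combo_contMDiffOn (N := Bundle.TotalSpace F V) (IN := IB.prod 𝓘(ℝ, F))
    (hρ.smooth.of_le (by simp)) (hρ'.smooth.of_le (by simp))
    (Icc_subset_Icc (le_refl (0:ℝ)) (by norm_num : (2/3:ℝ) ≤ 1))
  have hσB := combo_contMDiffOn (N := Bundle.TotalSpace F V) (IN := IB.prod 𝓘(ℝ, F))
    (hρ.smooth.of_le (by simp)) (hρ'.smooth.of_le (by simp))
    (Icc_subset_Icc (by norm_num : (0:ℝ) ≤ 1/3) (le_refl (1:ℝ)))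
  have hdA := combo_contMDiffOn (N := Bundle.TotalSpace F V) (IN := IB.prod 𝓘(ℝ, F))
    (glue_deriv_smooth hρ) (glue_deriv_smooth hρ')
    (Icc_subset_Icc (le_refl (0:ℝ)) (by norm_num : (2/3:ℝ) ≤ 1))
  have hdB := combo_contMDiffOn (N := Bundle.TotalSpace F V) (IN := IB.prod 𝓘(ℝ, F))
    (glue_deriv_smooth hρ) (glue_deriv_smooth hρ')
    (Icc_subset_Icc (by norm_num : (0:ℝ) ≤ 1/3) (le_refl (1:ℝ)))
  have hAform : ContMDiffOn (((IB.prod 𝓘(ℝ, F)).prod 𝓘(ℝ, ℝ)).prod 𝓘(ℝ, ℝ)) 𝓘(ℝ, ℝ) (⊤ : ℕ∞)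
      (fun p : (Bundle.TotalSpace F V × ℝ) × ℝ =>
        2 * ((1 - p.2) * derivWithin ρ (Icc 0 1) p.1.2 +
          p.2 * derivWithin ρ' (Icc 0 1) p.1.2) *
          A.ham.F (2 * ((1 - p.2) * ρ p.1.2 + p.2 * ρ' p.1.2)) p.1.1)
      ((univ ×ˢ Icc (0:ℝ) (2/3)) ×ˢ Icc 0 1) := by
    refine (contMDiffOn_const.mul hdA).mul ?_
    refine A.ham.smooth_F.comp (ContMDiffOn.prodMk ?_ ?_) ?_
    · exact (contMDiff_fst.comp contMDiff_fst).contMDiffOn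
    · exact contMDiffOn_const.mul hσA
    · intro p hp
      refine ⟨trivial, ?_, ?_⟩
      · have := (hmem p.2 hp.2 p.1.2 ⟨hp.1.2.1, by linarith [hp.1.2.2]⟩).1
        show (0:ℝ) ≤ 2 * ((1 - p.2) * ρ p.1.2 + p.2 * ρ' p.1.2); linarith
      · have := hle p.2 hp.2 p.1.2 hp.1.2
        show 2 * ((1 - p.2) * ρ p.1.2 + p.2 * ρ' p.1.2) ≤ 1; linarith
  have hBform : ContMDiffOn (((IB.prod 𝓘(ℝ, F)).prod 𝓘(ℝ, ℝ)).prod 𝓘(ℝ, ℝ)) 𝓘(ℝ, ℝ) (⊤ : ℕ∞)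
      (fun p : (Bundle.TotalSpace F V × ℝ) × ℝ =>
        2 * ((1 - p.2) * derivWithin ρ (Icc 0 1) p.1.2 +
          p.2 * derivWithin ρ' (Icc 0 1) p.1.2) *
          B.ham.F (2 * ((1 - p.2) * ρ p.1.2 + p.2 * ρ' p.1.2) - 1) p.1.1)
      ((univ ×ˢ Icc (1/3:ℝ) 1) ×ˢ Icc 0 1) := by
    refine (contMDiffOn_const.mul hdB).mul ?_
    refine B.ham.smooth_F.comp (ContMDiffOn.prodMk ?_ ?_) ?_
    · exact (contMDiff_fst.comp contMDiff_fst).contMDiffOn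
    · exact (contMDiffOn_const.mul hσB).sub contMDiffOn_const
    · intro p hp
      refine ⟨trivial, ?_, ?_⟩
      · have := hge p.2 hp.2 p.1.2 hp.1.2
        show (0:ℝ) ≤ 2 * ((1 - p.2) * ρ p.1.2 + p.2 * ρ' p.1.2) - 1; linarith
      · have := (hmem p.2 hp.2 p.1.2 ⟨by linarith [hp.1.2.1], hp.1.2.2⟩).2
        show 2 * ((1 - p.2) * ρ p.1.2 + p.2 * ρ' p.1.2) - 1 ≤ 1; linarith
  intro p hp
  rcases lt_or_ge p.1.2 (2/3) with hlt | hge'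
  · have hpA : p ∈ (univ ×ˢ Icc (0:ℝ) (2/3)) ×ˢ Icc (0:ℝ) 1 :=
      ⟨⟨trivial, hp.1.2.1, hlt.le⟩, hp.2⟩
    refine ((hAform p hpA).congr ?_ ?_).mono_of_mem_nhdsWithin ?_
    · intro q hq
      simp only [isoGen, if_pos hq.1.2.2]
    · simp only [isoGen, if_pos hlt.le]
    · refine mem_nhdsWithin.mpr ⟨(fun q : (Bundle.TotalSpace F V × ℝ) × ℝ => q.1.2) ⁻¹'
        Iio (2/3), isOpen_Iio.preimage (continuous_snd.comp continuous_fst), hlt, ?_⟩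
      intro q hq
      exact ⟨⟨trivial, hq.2.1.2.1, le_of_lt hq.1⟩, hq.2.2⟩
  · have hpB : p ∈ (univ ×ˢ Icc (1/3:ℝ) 1) ×ˢ Icc (0:ℝ) 1 :=
      ⟨⟨trivial, by linarith, hp.1.2.2⟩, hp.2⟩
    refine ((hBform p hpB).congr ?_ ?_).mono_of_mem_nhdsWithin ?_
    · intro q hq
      simp only [isoGen]
      split_ifs with h
      · rw [glue_deriv_zero hρ ⟨hq.1.2.1, h⟩, glue_deriv_zero hρ' ⟨hq.1.2.1, h⟩]; ring
      · rfl
    · simp only [isoGen]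
      split_ifs with h
      · rw [glue_deriv_zero hρ ⟨by linarith, h⟩, glue_deriv_zero hρ' ⟨by linarith, h⟩]; ring
      · rfl
    · refine mem_nhdsWithin.mpr ⟨(fun q : (Bundle.TotalSpace F V × ℝ) × ℝ => q.1.2) ⁻¹'
        Ioi (1/3), isOpen_Ioi.preimage (continuous_snd.comp continuous_fst), by
          simp only [mem_preimage, mem_Ioi]; linarith, ?_⟩
      intro q hq
      exact ⟨⟨trivial, le_of_lt hq.1, hq.2.1.2.2⟩, hq.2.2⟩



set_option maxHeartbeats 1000000 in
lemma aux_deriv_eq {μ ν ω : ∀ x, V x} (A : HamiltonianHomotopy P μ ν)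
    (B : HamiltonianHomotopy P ν ω) {ρ ρ' : ℝ → ℝ}
    (hρ : IsGluingFunction ρ) (hρ' : IsGluingFunction ρ') :
    ∀ s ∈ Icc (0:ℝ) 1, ∀ f : Bundle.TotalSpace F V → ℝ,
    ContMDiff (IB.prod 𝓘(ℝ, F)) 𝓘(ℝ, ℝ) (⊤ : ℕ∞) f → ∀ x : Bundle.TotalSpace F V,
    ∀ t ∈ Icc (0:ℝ) 1,
    HasDerivWithinAt (fun τ => f (compPhi A B (fun u => (1 - s) * ρ u + s * ρ' u) τ x))
      (P.bracket (isoGen A B (fun u => (1 - s) * ρ u + s * ρ' u)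
          (fun u => (1 - s) * derivWithin ρ (Icc 0 1) u +
            s * derivWithin ρ' (Icc 0 1) u) t) f
        (compPhi A B (fun u => (1 - s) * ρ u + s * ρ' u) t x)) (Icc 0 1) t := by
  intro s hs f hf x t ht
  obtain ⟨g, hgdef⟩ : ∃ g : ℝ → ℝ, g = fun u => (1 - s) * ρ u + s * ρ' u := ⟨_, rfl⟩
  obtain ⟨d, hddef⟩ : ∃ d : ℝ → ℝ, d = fun u => (1 - s) * derivWithin ρ (Icc 0 1) u +
    s * derivWithin ρ' (Icc 0 1) u := ⟨_, rfl⟩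
  rw [← hgdef, ← hddef]
  have hhalf : ∀ u ∈ Icc (1/3:ℝ) (2/3), g u = 1/2 := by
    intro u hu; simp only [hgdef]; rw [hρ.eq_half u hu, hρ'.eq_half u hu]; ring
  have hmem : ∀ u ∈ Icc (0:ℝ) 1, g u ∈ Icc (0:ℝ) 1 := by
    intro u hu
    have h1 := hρ.mapsTo hu; have h2 := hρ'.mapsTo hu
    simp only [hgdef]
    constructor
    · nlinarith [h1.1, h2.1, hs.1, hs.2]
    · nlinarith [h1.2, h2.2, hs.1, hs.2]
  have hle : ∀ u ∈ Icc (0:ℝ) (2/3), g u ≤ 1/2 := by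
    intro u hu
    have h1 := glue_le_half hρ hu.1 hu.2; have h2 := glue_le_half hρ' hu.1 hu.2
    simp only [hgdef]; nlinarith [hs.1, hs.2]
  have hge : ∀ u ∈ Icc (1/3:ℝ) 1, 1/2 ≤ g u := by
    intro u hu
    have h1 := glue_ge_half hρ hu.1 hu.2; have h2 := glue_ge_half hρ' hu.1 hu.2
    simp only [hgdef]; nlinarith [hs.1, hs.2]
  have hgder : ∀ u ∈ Icc (0:ℝ) 1, HasDerivWithinAt g (d u) (Icc 0 1) u := by
    intro u hu
    simp only [hgdef, hddef]
    exact ((glue_hasDeriv hρ hu).const_mul (1 - s)).add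
      ((glue_hasDeriv hρ' hu).const_mul s)
  have hd0 : ∀ u ∈ Icc (1/3:ℝ) (2/3), d u = 0 := by
    intro u hu
    simp only [hddef]; rw [glue_deriv_zero hρ hu, glue_deriv_zero hρ' hu]; ring
  -- A-side derivative
  have keyA : ∀ t' ∈ Icc (0:ℝ) (2/3),
      HasDerivWithinAt (fun τ => f (compPhi A B g τ x))
        (P.bracket (A.ham.F (2 * g t')) f (A.ham.toFun (2 * g t') x) * (2 * d t'))
        (Icc 0 (2/3)) t' := by
    intro t' ht'
    have ht'1 : t' ∈ Icc (0:ℝ) 1 := ⟨ht'.1, by linarith [ht'.2]⟩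
    have hmem2 : 2 * g t' ∈ Icc (0:ℝ) 1 :=
      ⟨by linarith [(hmem t' ht'1).1], by linarith [hle t' ht']⟩
    have hinner : HasDerivWithinAt (fun τ => 2 * g τ) (2 * d t') (Icc 0 (2/3)) t' :=
      ((hgder t' ht'1).const_mul 2).mono (Icc_subset_Icc le_rfl (by norm_num))
    have houter := A.ham.deriv_eq f hf x (2 * g t') hmem2
    have hmt : MapsTo (fun τ => 2 * g τ) (Icc (0:ℝ) (2/3)) (Icc (0:ℝ) 1) := by
      intro τ hτ
      have hτ1 : τ ∈ Icc (0:ℝ) 1 := ⟨hτ.1, by linarith [hτ.2]⟩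
      refine ⟨?_, ?_⟩
      · show (0:ℝ) ≤ 2 * g τ; linarith [(hmem τ hτ1).1]
      · show 2 * g τ ≤ 1; linarith [hle τ hτ]
    have hcomp := houter.comp t' hinner hmt
    refine hcomp.congr ?_ ?_
    · intro y hy
      exact congrArg f (compPhi_eq_left A B hhalf hy.2 x)
    · exact congrArg f (compPhi_eq_left A B hhalf ht'.2 x)
  -- B-side derivative
  have keyB : ∀ t' ∈ Icc (2/3:ℝ) 1,
      HasDerivWithinAt (fun τ => f (compPhi A B g τ x))
        (P.bracket (B.ham.F (2 * g t' - 1)) f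
          (B.ham.toFun (2 * g t' - 1) (A.ham.toFun 1 x)) * (2 * d t'))
        (Icc (2/3) 1) t' := by
    intro t' ht'
    have ht'1 : t' ∈ Icc (0:ℝ) 1 := ⟨by linarith [ht'.1], ht'.2⟩
    have ht'3 : t' ∈ Icc (1/3:ℝ) 1 := ⟨by linarith [ht'.1], ht'.2⟩
    have hmem2 : 2 * g t' - 1 ∈ Icc (0:ℝ) 1 :=
      ⟨by linarith [hge t' ht'3], by linarith [(hmem t' ht'1).2]⟩
    have hinner : HasDerivWithinAt (fun τ => 2 * g τ - 1) (2 * d t') (Icc (2/3) 1) t' :=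
      (((hgder t' ht'1).const_mul 2).sub_const 1).mono
        (Icc_subset_Icc (by norm_num) le_rfl)
    have houter := B.ham.deriv_eq f hf (A.ham.toFun 1 x) (2 * g t' - 1) hmem2
    have hmt : MapsTo (fun τ => 2 * g τ - 1) (Icc (2/3:ℝ) 1) (Icc (0:ℝ) 1) := by
      intro τ hτ
      have hτ1 : τ ∈ Icc (0:ℝ) 1 := ⟨by linarith [hτ.1], hτ.2⟩
      have hτ3 : τ ∈ Icc (1/3:ℝ) 1 := ⟨by linarith [hτ.1], hτ.2⟩
      refine ⟨?_, ?_⟩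
      · show (0:ℝ) ≤ 2 * g τ - 1; linarith [hge τ hτ3]
      · show 2 * g τ - 1 ≤ 1; linarith [(hmem τ hτ1).2]
    have hcomp := houter.comp t' hinner hmt
    refine hcomp.congr ?_ ?_
    · intro y hy
      exact congrArg f (compPhi_eq_right A B hhalf (by linarith [hy.1]) x)
    · exact congrArg f (compPhi_eq_right A B hhalf (by linarith [ht'.1]) x)
  have hsliceA : ∀ r ∈ Icc (0:ℝ) 1, ContMDiff (IB.prod 𝓘(ℝ, F)) 𝓘(ℝ, ℝ) (⊤ : ℕ∞) (A.ham.F r) :=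
    fun r hr => A.ham.contMDiff_F_slice hr
  have hsliceB : ∀ r ∈ Icc (0:ℝ) 1, ContMDiff (IB.prod 𝓘(ℝ, F)) 𝓘(ℝ, ℝ) (⊤ : ℕ∞) (B.ham.F r) :=
    fun r hr => B.ham.contMDiff_F_slice hr
  rcases lt_trichotomy t (2/3) with hlt | heq | hgt
  · -- t < 2/3
    have hA := keyA t ⟨ht.1, hlt.le⟩
    have hmem2 : 2 * g t ∈ Icc (0:ℝ) 1 :=
      ⟨by linarith [(hmem t ht).1], by linarith [hle t ⟨ht.1, hlt.le⟩]⟩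
    have hgenA : isoGen A B g d t = (2 * d t) • A.ham.F (2 * g t) := by
      funext p
      simp only [isoGen, if_pos hlt.le, Pi.smul_apply, smul_eq_mul]
    have hbr : P.bracket (isoGen A B g d t) f (compPhi A B g t x) =
        P.bracket (A.ham.F (2 * g t)) f (A.ham.toFun (2 * g t) x) * (2 * d t) := by
      rw [hgenA, P.smul_left _ _ _ (hsliceA _ hmem2) hf, Pi.smul_apply, smul_eq_mul,
        compPhi_eq_left A B hhalf hlt.le x]
      ring
    rw [hbr]
    exact hA.mono_of_mem_nhdsWithin (mem_nhdsWithin.mpr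
      ⟨Iio (2/3), isOpen_Iio, hlt, fun y hy => ⟨hy.2.1, le_of_lt hy.1⟩⟩)
  · -- t = 2/3
    subst heq
    have hd2 : d (2/3) = 0 := hd0 _ ⟨by norm_num, le_rfl⟩
    have hmemA : 2 * g (2/3) ∈ Icc (0:ℝ) 1 :=
      ⟨by linarith [(hmem (2/3) ⟨by norm_num, by norm_num⟩).1],
       by linarith [hle (2/3) ⟨by norm_num, le_rfl⟩]⟩
    have hzero : P.bracket (isoGen A B g d (2/3)) f (compPhi A B g (2/3) x) = 0 := by
      have hgenA : isoGen A B g d (2/3) = (2 * d (2/3)) • A.ham.F (2 * g (2/3)) := by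
        funext p
        simp only [isoGen, if_pos (le_refl (2/3:ℝ)), Pi.smul_apply, smul_eq_mul]
      rw [hgenA, P.smul_left _ _ _ (hsliceA _ hmemA) hf, Pi.smul_apply, smul_eq_mul, hd2]
      ring
    rw [hzero]
    have hA := keyA (2/3) ⟨by norm_num, le_rfl⟩
    have hB := keyB (2/3) ⟨le_rfl, by norm_num⟩
    rw [show P.bracket (A.ham.F (2 * g (2/3))) f (A.ham.toFun (2 * g (2/3)) x) *
        (2 * d (2/3)) = 0 by rw [hd2]; ring] at hA
    rw [show P.bracket (B.ham.F (2 * g (2/3) - 1)) f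
        (B.ham.toFun (2 * g (2/3) - 1) (A.ham.toFun 1 x)) * (2 * d (2/3)) = 0 by
        rw [hd2]; ring] at hB
    have := hA.union hB
    rwa [Icc_union_Icc_eq_Icc (by norm_num : (0:ℝ) ≤ 2/3) (by norm_num : (2/3:ℝ) ≤ 1)]
      at this
  · -- t > 2/3
    have hB := keyB t ⟨hgt.le, ht.2⟩
    have ht3 : t ∈ Icc (1/3:ℝ) 1 := ⟨by linarith, ht.2⟩
    have hmem2 : 2 * g t - 1 ∈ Icc (0:ℝ) 1 :=
      ⟨by linarith [hge t ht3], by linarith [(hmem t ht).2]⟩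
    have hgenB : isoGen A B g d t = (2 * d t) • B.ham.F (2 * g t - 1) := by
      funext p
      simp only [isoGen, if_neg (not_le.mpr hgt), Pi.smul_apply, smul_eq_mul]
    have hbr : P.bracket (isoGen A B g d t) f (compPhi A B g t x) =
        P.bracket (B.ham.F (2 * g t - 1)) f
          (B.ham.toFun (2 * g t - 1) (A.ham.toFun 1 x)) * (2 * d t) := by
      rw [hgenB, P.smul_left _ _ _ (hsliceB _ hmem2) hf, Pi.smul_apply, smul_eq_mul,
        compPhi_eq_right A B hhalf (by linarith) x]
      ring
    rw [hbr]
    exact hB.mono_of_mem_nhdsWithin (mem_nhdsWithin.mpr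
      ⟨Ioi (2/3), isOpen_Ioi, hgt, fun y hy => ⟨le_of_lt hy.1, hy.2.2⟩⟩)


/-- The composition of two Hamiltonian homotopies between coisotropic sections with
respect to two gluing functions `ρ` and `ρ'` gives isotopic Hamiltonian homotopies:
`(B, ψ) □_ρ (A, φ) ≃_H (B, ψ) □_{ρ'} (A, φ)`. -/
theorem statement_9 (hP : IsCoisotropicVectorBundle P) (μ ν ω : ∀ x, V x)
    (hμ : IsSmoothSection IB F μ ∧ IsCoisotropic P (secGraph F μ))
    (hν : IsSmoothSection IB F ν ∧ IsCoisotropic P (secGraph F ν))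
    (hω : IsSmoothSection IB F ω ∧ IsCoisotropic P (secGraph F ω))
    (A : HamiltonianHomotopy P μ ν) (B : HamiltonianHomotopy P ν ω)
    (ρ ρ' : ℝ → ℝ) (hρ : IsGluingFunction ρ) (hρ' : IsGluingFunction ρ')
    (Cc Cc' : HamiltonianHomotopy P μ ω)
    (hC : RealizesComp Cc B A ρ) (hC' : RealizesComp Cc' B A ρ') :
    IsotopicHH Cc Cc' := by
  obtain ⟨hC1, hC2⟩ := hC
  obtain ⟨hC'1, hC'2⟩ := hC'
  have hhalf : ∀ s : ℝ, ∀ u ∈ Icc (1/3:ℝ) (2/3), (1 - s) * ρ u + s * ρ' u = 1/2 := by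
    intro s u hu; rw [hρ.eq_half u hu, hρ'.eq_half u hu]; ring
  have h2A : ∀ s ∈ Icc (0:ℝ) 1, ∀ u, 0 ≤ u → u ≤ 2/3 →
      2 * ((1 - s) * ρ u + s * ρ' u) ∈ Icc (0:ℝ) 1 := by
    intro s hs u h0 h1
    have hu : u ∈ Icc (0:ℝ) 1 := ⟨h0, by linarith⟩
    have m1 := hρ.mapsTo hu; have m2 := hρ'.mapsTo hu
    have l1 := glue_le_half hρ h0 h1; have l2 := glue_le_half hρ' h0 h1
    constructor
    · nlinarith [m1.1, m2.1, hs.1, hs.2]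
    · nlinarith [hs.1, hs.2]
  have h2B : ∀ s ∈ Icc (0:ℝ) 1, ∀ u, 1/3 ≤ u → u ≤ 1 →
      2 * ((1 - s) * ρ u + s * ρ' u) - 1 ∈ Icc (0:ℝ) 1 := by
    intro s hs u h0 h1
    have hu : u ∈ Icc (0:ℝ) 1 := ⟨by linarith, h1⟩
    have m1 := hρ.mapsTo hu; have m2 := hρ'.mapsTo hu
    have l1 := glue_ge_half hρ h0 h1; have l2 := glue_ge_half hρ' h0 h1
    constructor
    · nlinarith [hs.1, hs.2]
    · nlinarith [m1.2, m2.2, hs.1, hs.2]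
  refine ⟨{
    sec := fun t s => compSec A B (fun u => (1 - s) * ρ u + s * ρ' u) t
    smooth_sec := aux_smooth_sec A B hρ hρ'
    Φ := fun t s => compPhi A B (fun u => (1 - s) * ρ u + s * ρ' u) t
    Φinv := fun t s => isoPhiInv A B (fun u => (1 - s) * ρ u + s * ρ' u) t
    smooth_Φ := aux_smooth_Phi A B hρ hρ'
    smooth_each := ?_
    smooth_inv := ?_
    left_inv := ?_
    right_inv := ?_
    Φ_zero := ?_
    sec_one_const := ?_
    gen := fun t s => isoGen A B (fun u => (1 - s) * ρ u + s * ρ' u)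
      (fun u => (1 - s) * derivWithin ρ (Icc 0 1) u + s * derivWithin ρ' (Icc 0 1) u) t
    smooth_gen := aux_smooth_gen A B hρ hρ'
    deriv_eq := aux_deriv_eq A B hρ hρ'
    graph_eq := ?_ }, ?_, ?_, ?_, ?_⟩
  · -- smooth_each
    intro t ht s hs
    beta_reduce
    rcases le_or_gt t (2/3) with h | h
    · have heq : compPhi A B (fun u => (1 - s) * ρ u + s * ρ' u) t =
          A.ham.toFun (2 * ((1 - s) * ρ t + s * ρ' t)) :=
        funext (compPhi_eq_left A B (hhalf s) h)
      rw [heq]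
      exact A.ham.smooth_each _ (h2A s hs t ht.1 h)
    · have heq : compPhi A B (fun u => (1 - s) * ρ u + s * ρ' u) t =
          (B.ham.toFun (2 * ((1 - s) * ρ t + s * ρ' t) - 1)) ∘ (A.ham.toFun 1) :=
        funext (compPhi_eq_right A B (hhalf s) (by linarith))
      rw [heq]
      exact (B.ham.smooth_each _ (h2B s hs t (by linarith) ht.2)).comp
        (A.ham.smooth_each 1 ⟨zero_le_one, le_rfl⟩)
  · -- smooth_inv
    intro t ht s hs
    beta_reduce
    by_cases h1 : t ≤ 1/3
    · have heq : isoPhiInv A B (fun u => (1 - s) * ρ u + s * ρ' u) t =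
          A.ham.invFun (2 * ((1 - s) * ρ t + s * ρ' t)) := by
        funext x; simp only [isoPhiInv, if_pos h1]
      rw [heq]
      exact A.ham.smooth_inv _ (h2A s hs t ht.1 (by linarith))
    · by_cases h2 : t ≤ 2/3
      · have heq : isoPhiInv A B (fun u => (1 - s) * ρ u + s * ρ' u) t =
            A.ham.invFun 1 := by
          funext x; simp only [isoPhiInv, if_neg h1, if_pos h2]
        rw [heq]
        exact A.ham.smooth_inv 1 ⟨zero_le_one, le_rfl⟩
      · have heq : isoPhiInv A B (fun u => (1 - s) * ρ u + s * ρ' u) t =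
            (A.ham.invFun 1) ∘ (B.ham.invFun (2 * ((1 - s) * ρ t + s * ρ' t) - 1)) := by
          funext x; simp only [isoPhiInv, if_neg h1, if_neg h2, Function.comp]
        rw [heq]
        exact (A.ham.smooth_inv 1 ⟨zero_le_one, le_rfl⟩).comp
          (B.ham.smooth_inv _ (h2B s hs t (by linarith) ht.2))
  · -- left_inv
    intro t ht s hs x
    by_cases h1 : t ≤ 1/3
    · show isoPhiInv A B _ t (compPhi A B _ t x) = x
      simp only [isoPhiInv, compPhi, if_pos h1]
      exact A.ham.left_inv _ (h2A s hs t ht.1 (by linarith)) x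
    · by_cases h2 : t ≤ 2/3
      · show isoPhiInv A B _ t (compPhi A B _ t x) = x
        simp only [isoPhiInv, compPhi, if_neg h1, if_pos h2]
        exact A.ham.left_inv 1 ⟨zero_le_one, le_rfl⟩ x
      · show isoPhiInv A B _ t (compPhi A B _ t x) = x
        simp only [isoPhiInv, compPhi, if_neg h1, if_neg h2]
        rw [B.ham.left_inv _ (h2B s hs t (by linarith) ht.2) (A.ham.toFun 1 x),
          A.ham.left_inv 1 ⟨zero_le_one, le_rfl⟩ x]
  · -- right_inv
    intro t ht s hs x
    by_cases h1 : t ≤ 1/3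
    · show compPhi A B _ t (isoPhiInv A B _ t x) = x
      simp only [isoPhiInv, compPhi, if_pos h1]
      exact A.ham.right_inv _ (h2A s hs t ht.1 (by linarith)) x
    · by_cases h2 : t ≤ 2/3
      · show compPhi A B _ t (isoPhiInv A B _ t x) = x
        simp only [isoPhiInv, compPhi, if_neg h1, if_pos h2]
        exact A.ham.right_inv 1 ⟨zero_le_one, le_rfl⟩ x
      · show compPhi A B _ t (isoPhiInv A B _ t x) = x
        simp only [isoPhiInv, compPhi, if_neg h1, if_neg h2]
        rw [A.ham.right_inv 1 ⟨zero_le_one, le_rfl⟩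
            (B.ham.invFun (2 * ((1 - s) * ρ t + s * ρ' t) - 1) x),
          B.ham.right_inv _ (h2B s hs t (by linarith) ht.2) x]
  · -- Φ_zero
    intro s hs
    funext x
    have h0 : (1 - s) * ρ 0 + s * ρ' 0 = 0 := by rw [hρ.map_zero, hρ'.map_zero]; ring
    show compPhi A B _ 0 x = id x
    rw [compPhi_eq_left A B (hhalf s) (by norm_num) x, h0]
    simp [A.ham.init]
  · -- sec_one_const
    intro s hs s' hs'
    beta_reduce
    have key : ∀ σ : ℝ, compSec A B (fun u => (1 - σ) * ρ u + σ * ρ' u) 1 = ω := by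
      intro σ
      rw [compSec_eq_right A B (hhalf σ) (by norm_num)]
      have h1 : (1 - σ) * ρ 1 + σ * ρ' 1 = 1 := by rw [hρ.map_one, hρ'.map_one]; ring
      rw [h1]
      norm_num [B.sec_one]
    rw [key s, key s']
  · -- graph_eq
    intro t ht s hs
    have hsec0 : compSec A B (fun u => (1 - s) * ρ u + s * ρ' u) 0 = μ := by
      rw [compSec_eq_left A B (hhalf s) (by norm_num)]
      have h0 : (1 - s) * ρ 0 + s * ρ' 0 = 0 := by rw [hρ.map_zero, hρ'.map_zero]; ring
      rw [h0]
      norm_num [A.sec_zero]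
    show compPhi A B (fun u => (1 - s) * ρ u + s * ρ' u) t ''
        secGraph F (compSec A B (fun u => (1 - s) * ρ u + s * ρ' u) 0) =
      secGraph F (compSec A B (fun u => (1 - s) * ρ u + s * ρ' u) t)
    rw [hsec0]
    rcases le_or_gt t (2/3) with h | h
    · have hfun : compPhi A B (fun u => (1 - s) * ρ u + s * ρ' u) t =
          A.ham.toFun (2 * ((1 - s) * ρ t + s * ρ' t)) :=
        funext (compPhi_eq_left A B (hhalf s) h)
      rw [hfun, compSec_eq_left A B (hhalf s) h]
      exact A.graph_eq _ (h2A s hs t ht.1 h)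
    · have hfun : compPhi A B (fun u => (1 - s) * ρ u + s * ρ' u) t =
          (B.ham.toFun (2 * ((1 - s) * ρ t + s * ρ' t) - 1)) ∘ (A.ham.toFun 1) :=
        funext (compPhi_eq_right A B (hhalf s) (by linarith))
      rw [hfun, Set.image_comp, A.graph_eq 1 ⟨zero_le_one, le_rfl⟩, A.sec_one,
        compSec_eq_right A B (hhalf s) (by linarith)]
      exact B.graph_eq _ (h2B s hs t (by linarith) ht.2)
  · -- connects: sec at 0
    intro t ht
    have e : (fun u => (1 - (0:ℝ)) * ρ u + 0 * ρ' u) = ρ := by funext u; ring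
    show compSec A B (fun u => (1 - (0:ℝ)) * ρ u + 0 * ρ' u) t = Cc.sec t
    rw [e]
    exact (hC1 t ht).symm
  · -- connects: Φ at 0
    intro t ht
    have e : (fun u => (1 - (0:ℝ)) * ρ u + 0 * ρ' u) = ρ := by funext u; ring
    show compPhi A B (fun u => (1 - (0:ℝ)) * ρ u + 0 * ρ' u) t = Cc.ham.toFun t
    rw [e]
    exact (hC2 t ht).symm
  · -- connects: sec at 1
    intro t ht
    have e : (fun u => (1 - (1:ℝ)) * ρ u + 1 * ρ' u) = ρ' := by funext u; ring
    show compSec A B (fun u => (1 - (1:ℝ)) * ρ u + 1 * ρ' u) t = Cc'.sec t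
    rw [e]
    exact (hC'1 t ht).symm
  · -- connects: Φ at 1
    intro t ht
    have e : (fun u => (1 - (1:ℝ)) * ρ u + 1 * ρ' u) = ρ' := by funext u; ring
    show compPhi A B (fun u => (1 - (1:ℝ)) * ρ u + 1 * ρ' u) t = Cc'.ham.toFun t
    rw [e]
    exact (hC'2 t ht).symm

end Bundle
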